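/- arXiv:math/0301330 — 2 statements merged into one kernel-verified Lean document; each statement's English description precedes it below -/
import Mathlib

section
/- Let τ ∈ ℝ_{<0} and let z ∈ ℂ with |Re(z)| < 1 − τ^{-1}. Then the function y ↦ (1/y)·( z/y − sinh(τyz)/(sinh(y)·sinh(τy)) ) is absolutely integrable on (0,∞); consequently γ_τ(z) := (1/(2i))·∫_0^∞ ( z/y − sinh(τyz)/(sinh(y)·sinh(τy)) ) dy/y is well defined, and z ↦ G_τ(z) := exp(i·γ_τ(z)) is analytic on the strip {z ∈ ℂ : |Re(z)| < 1 − τ^{-1}}. -/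
noncomputable section

open Complex MeasureTheory Set

/-- The integrand `(1/y)·( z/y − sinh(τyz)/(sinh(y)·sinh(τy)) )` in Ruijsenaars'
hyperbolic gamma function. -/
def hypInt (τ : ℝ) (z : ℂ) (y : ℝ) : ℂ :=
  (z / (y : ℂ) -
      Complex.sinh ((τ : ℂ) * (y : ℂ) * z) /
        (Complex.sinh (y : ℂ) * Complex.sinh ((τ : ℂ) * (y : ℂ)))) / (y : ℂ)

/-- `γ_τ(z) = (1/(2i))·∫_0^∞ ( z/y − sinh(τyz)/(sinh(y)·sinh(τy)) ) dy/y`. -/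
def hypGammaArg (τ : ℝ) (z : ℂ) : ℂ :=
  (2 * Complex.I)⁻¹ * ∫ y in Set.Ioi (0 : ℝ), hypInt τ z y

/-- `G_τ(z) = exp(i·γ_τ(z))` on the strip `|Re z| < 1 − τ⁻¹`. -/
def hypGammaStrip (τ : ℝ) (z : ℂ) : ℂ := Complex.exp (Complex.I * hypGammaArg τ z)

/-!
Near `y = 0` the integrand equals `(z sinh y sinh τy − y sinh τyz) / (y² sinh y sinh τy)`; in the
numerator the cubic Taylor terms of `sinh` cancel, so it is `O(y⁴)`, while the denominator is at
least `|τ| y⁴`. For large `y` the integrand is `z / y²` plus a term of size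
`exp (-(1 - τ + τ |Re z|) y)`, which decays exactly when `|Re z| < 1 − τ⁻¹`. Both bounds are
uniform for `z` in a small closed disc. By Cauchy's estimate such a locally uniform integrable
bound on a family of holomorphic functions also dominates their derivatives, so the integral may be
differentiated under the integral sign and is holomorphic on the strip.
-/

open Filter Topology Metric

theorem aestronglyMeasurable_deriv_of_ae_differentiableAt {α E : Type*} [MeasurableSpace α]
    {μ : Measure α} [NormedAddCommGroup E] [NormedSpace ℂ E] {F : ℂ → α → E} {z₀ : ℂ} {r : ℝ} (hr : 0 < r)
    (hF_meas : ∀ z ∈ ball z₀ r, AEStronglyMeasurable (F z) μ)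
    (hF_diff : ∀ᵐ a ∂μ, DifferentiableAt ℂ (F · a) z₀) :
    AEStronglyMeasurable (fun a ↦ deriv (F · a) z₀) μ := by
  set s : ℕ → ℝ := fun n ↦ r / (n + 2)
  have hs_pos (n : ℕ) : 0 < s n := by positivity
  have hs_lt (n : ℕ) : s n < r := div_lt_self hr (by linarith [n.cast_nonneg (α := ℝ)])
  have hs : Tendsto (fun n ↦ (s n : ℂ)) atTop (𝓝[≠] 0) := by
    refine tendsto_nhdsWithin_iff.2 ⟨?_, .of_forall fun n ↦ ofReal_ne_zero.2 (hs_pos n).ne'⟩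
    have := (tendsto_const_div_atTop_nhds_zero_nat r).comp (tendsto_add_atTop_nat 2)
    simpa [s, Function.comp_def] using (continuous_ofReal.tendsto 0).comp this
  refine aestronglyMeasurable_of_tendsto_ae atTop
    (f := fun n a ↦ (s n : ℂ)⁻¹ • (F (z₀ + s n) a - F z₀ a))
    (fun n ↦ ((hF_meas _ ?_).sub (hF_meas _ (mem_ball_self hr))).const_smul _) ?_
  · simpa [abs_of_pos (hs_pos n)] using hs_lt n
  · filter_upwards [hF_diff] with a ha
    exact ha.hasDerivAt.tendsto_slope_zero.comp hs

theorem differentiableOn_integral_of_dominated {α E : Type*} [MeasurableSpace α]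
    {μ : Measure α} [NormedAddCommGroup E] [NormedSpace ℂ E] [CompleteSpace E]
    {F : ℂ → α → E} {U : Set ℂ} (hU : IsOpen U)
    (hF_meas : ∀ z ∈ U, AEStronglyMeasurable (F z) μ)
    (hF_diff : ∀ᵐ a ∂μ, DifferentiableOn ℂ (F · a) U)
    (hF_bound : ∀ z₀ ∈ U, ∃ r > 0, ∃ bound : α → ℝ, Integrable bound μ ∧
      ∀ᵐ a ∂μ, ∀ z ∈ closedBall z₀ r, ‖F z a‖ ≤ bound a) :
    DifferentiableOn ℂ (fun z ↦ ∫ a, F z a ∂μ) U := by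
  intro z₀ hz₀
  obtain ⟨r, hr, bound, hbound_int, hbound⟩ := hF_bound z₀ hz₀
  obtain ⟨ρ, hρ, hρU⟩ := Metric.isOpen_iff.1 hU z₀ hz₀
  obtain ⟨ε, hε, hεr, hερ⟩ : ∃ ε > 0, 2 * ε ≤ r ∧ 2 * ε < ρ :=
    ⟨min r ρ / 3, by positivity, by linarith [min_le_left r ρ, lt_min hr hρ],
      by linarith [min_le_right r ρ, lt_min hr hρ]⟩
  have hsub : ∀ z ∈ ball z₀ ε, closedBall z ε ⊆ closedBall z₀ r ∩ U := fun z hz ↦ by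
    have h2ε : closedBall z ε ⊆ closedBall z₀ (2 * ε) :=
      closedBall_subset_closedBall' (by linarith [mem_ball.1 hz])
    exact fun w hw ↦ ⟨closedBall_subset_closedBall hεr (h2ε hw),
      hρU (closedBall_subset_ball hερ (h2ε hw))⟩
  have hF_int : Integrable (F z₀) μ :=
    hbound_int.mono' (hF_meas z₀ hz₀) (hbound.mono fun a ha ↦ ha z₀ (mem_closedBall_self hr.le))
  have hderiv_bound : ∀ᵐ a ∂μ, ∀ z ∈ ball z₀ ε, ‖deriv (F · a) z‖ ≤ bound a / ε := by
    filter_upwards [hF_diff, hbound] with a hdiff hbd z hz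
    exact Complex.norm_deriv_le_of_forall_mem_sphere_norm_le hε
      (hdiff.diffContOnCl_ball fun w hw ↦ (hsub z hz hw).2)
      fun w hw ↦ hbd w (hsub z hz (sphere_subset_closedBall hw)).1
  have hmain := hasDerivAt_integral_of_dominated_loc_of_deriv_le (ball_mem_nhds z₀ hε)
    (Filter.eventually_of_mem (ball_mem_nhds z₀ hρ) fun z hz ↦ hF_meas z (hρU hz)) hF_int
    (aestronglyMeasurable_deriv_of_ae_differentiableAt hρ (fun z hz ↦ hF_meas z (hρU hz))
      (hF_diff.mono fun a ha ↦ ha.differentiableAt (hU.mem_nhds hz₀)))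
    hderiv_bound (hbound_int.div_const ε) ?_
  · exact hmain.2.differentiableAt.differentiableWithinAt
  · filter_upwards [hF_diff] with a ha z hz
    exact (ha.differentiableAt (hU.mem_nhds (hsub z hz (mem_closedBall_self hε.le)).2)).hasDerivAt

namespace Complex

theorem norm_sinh_sub_self_le {w : ℂ} (hw : ‖w‖ ≤ 1) : ‖sinh w - w‖ ≤ ‖w‖ ^ 3 := by
  have hp := exp_bound hw (n := 3) (by norm_num)
  have hm := exp_bound (x := -w) (by rwa [norm_neg]) (n := 3) (by norm_num)
  simp only [Finset.sum_range_succ, Finset.sum_range_zero, norm_neg] at hp hm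
  have hsplit : sinh w - w =
      ((exp w - (1 + w + w ^ 2 / 2)) - (exp (-w) - (1 + -w + w ^ 2 / 2))) / 2 := by
    rw [sinh]; ring
  rw [hsplit, norm_div, RCLike.norm_ofNat]
  refine (div_le_div_of_nonneg_right (norm_sub_le _ _) zero_le_two).trans ?_
  norm_num [Nat.factorial] at hp hm
  nlinarith [pow_nonneg (norm_nonneg w) 3]

theorem norm_sinh_le_exp_abs_re (w : ℂ) : ‖sinh w‖ ≤ Real.exp |w.re| := by
  rw [sinh, norm_div, RCLike.norm_ofNat, div_le_iff₀ two_pos]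
  calc ‖exp w - exp (-w)‖ ≤ Real.exp w.re + Real.exp (-w).re := by
        simpa only [norm_exp] using norm_sub_le (exp w) (exp (-w))
    _ ≤ Real.exp |w.re| * 2 := by
        rw [neg_re]
        linarith [Real.exp_le_exp.2 (le_abs_self w.re), Real.exp_le_exp.2 (neg_le_abs w.re)]

theorem norm_sinh_ofReal (x : ℝ) : ‖sinh (x : ℂ)‖ = Real.sinh |x| := by
  rw [← ofReal_sinh, norm_real, Real.norm_eq_abs, Real.abs_sinh]

end Complex

theorem Real.one_sub_exp_mul_exp_le_sinh {a x : ℝ} (hax : a ≤ x) :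
    (1 - Real.exp (-(2 * a))) / 2 * Real.exp x ≤ Real.sinh x := by
  have : Real.exp (-x) ≤ Real.exp (-(2 * a)) * Real.exp x := by
    rw [← Real.exp_add]; exact Real.exp_le_exp.2 (by linarith)
  rw [Real.sinh_eq]; linarith

theorem sinh_mul_sinh_ne_zero {τ y : ℝ} (hτ : τ ≠ 0) (hy : y ≠ 0) :
    sinh (y : ℂ) * sinh (τ * y) ≠ 0 := by
  rw [← ofReal_mul, ← ofReal_sinh, ← ofReal_sinh, ← ofReal_mul, ofReal_ne_zero]
  exact mul_ne_zero (Real.sinh_ne_zero.2 hy) (Real.sinh_ne_zero.2 (mul_ne_zero hτ hy))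

theorem continuousOn_hypInt {τ : ℝ} (hτ : τ ≠ 0) (z : ℂ) : ContinuousOn (hypInt τ z) (Ioi 0) := by
  unfold hypInt
  fun_prop (disch := intro y hy; first
    | exact ofReal_ne_zero.2 (ne_of_gt hy) | exact sinh_mul_sinh_ne_zero hτ (ne_of_gt hy))

theorem differentiable_hypInt (τ y : ℝ) : Differentiable ℂ (hypInt τ · y) := by
  unfold hypInt; fun_prop

theorem norm_mul_sinh_mul_sinh_sub_le {u v z : ℂ} {s R : ℝ} (hs : s ≤ 1) (hu : ‖u‖ ≤ s)
    (hv : ‖v‖ ≤ s) (hvz : ‖v * z‖ ≤ s) (hz : ‖z‖ ≤ R) :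
    ‖z * sinh u * sinh v - u * sinh (v * z)‖ ≤ (3 * R + 1) * s ^ 4 := by
  have hs0 : 0 ≤ s := (norm_nonneg u).trans hu
  have hR0 : 0 ≤ R := (norm_nonneg z).trans hz
  have herr {w : ℂ} (hw : ‖w‖ ≤ s) : ‖sinh w - w‖ ≤ s ^ 3 :=
    (norm_sinh_sub_self_le (hw.trans hs)).trans (pow_le_pow_left₀ (norm_nonneg w) hw 3)
  have hu' := herr hu
  have hv' := herr hv
  have hvz' := herr hvz
  have hexpand : z * sinh u * sinh v - u * sinh (v * z) = z * (u * (sinh v - v) +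
      v * (sinh u - u) + (sinh u - u) * (sinh v - v)) - u * (sinh (v * z) - v * z) := by ring
  rw [hexpand]
  calc _ ≤ ‖z‖ * (‖u‖ * ‖sinh v - v‖ + ‖v‖ * ‖sinh u - u‖ + ‖sinh u - u‖ * ‖sinh v - v‖) +
        ‖u‖ * ‖sinh (v * z) - v * z‖ := by
        refine (norm_sub_le _ _).trans ?_
        rw [norm_mul, norm_mul]
        gcongr
        exact norm_add₃_le.trans_eq (by simp only [norm_mul])
    _ ≤ R * (s * s ^ 3 + s * s ^ 3 + s ^ 3 * s ^ 3) + s * s ^ 3 := by gcongr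
    _ ≤ (3 * R + 1) * s ^ 4 := by
        have : s ^ 6 ≤ s ^ 4 := pow_le_pow_of_le_one hs0 hs (by norm_num)
        nlinarith

theorem hypInt_eq {τ y : ℝ} (hτ : τ ≠ 0) (hy : y ≠ 0) (z : ℂ) :
    hypInt τ z y = (z * sinh y * sinh (τ * y) - y * sinh (τ * y * z)) /
      (y ^ 2 * (sinh y * sinh (τ * y))) := by
  have hy' : (y : ℂ) ≠ 0 := ofReal_ne_zero.2 hy
  rw [hypInt, div_sub_div _ _ hy' (sinh_mul_sinh_ne_zero hτ hy), div_div]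
  ring

theorem norm_sinh_mul_sinh_of_neg {τ y : ℝ} (hτ : τ < 0) (hy : 0 < y) :
    ‖sinh (y : ℂ) * sinh (τ * y)‖ = Real.sinh y * Real.sinh (-τ * y) := by
  rw [norm_mul, ← ofReal_mul, norm_sinh_ofReal, norm_sinh_ofReal, abs_of_pos hy,
    abs_of_neg (mul_neg_of_neg_of_pos hτ hy), neg_mul]

theorem norm_hypInt_le_of_mul_le_one {τ y R : ℝ} {z : ℂ} (hτ : τ < 0) (hz : ‖z‖ ≤ R)
    (hy : 0 < y) (hy_small : (1 - τ) * (1 + R) * y ≤ 1) :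
    ‖hypInt τ z y‖ ≤ (3 * R + 1) * ((1 - τ) * (1 + R)) ^ 4 / -τ := by
  have hR : 0 ≤ R := (norm_nonneg z).trans hz
  set a := (1 - τ) * (1 + R)
  have ha_ge : 1 ≤ a ∧ -τ ≤ a ∧ -τ * R ≤ a := by
    refine ⟨?_, ?_, ?_⟩ <;> nlinarith
  have hnum : ‖z * sinh y * sinh (τ * y) - y * sinh (τ * y * z)‖ ≤ (3 * R + 1) * (a * y) ^ 4 := by
    refine norm_mul_sinh_mul_sinh_sub_le hy_small ?_ ?_ ?_ hz
    · rw [norm_real, Real.norm_of_nonneg hy.le]; nlinarith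
    · rw [← ofReal_mul, norm_real, Real.norm_eq_abs, abs_of_neg (mul_neg_of_neg_of_pos hτ hy)]
      nlinarith
    · rw [← ofReal_mul, norm_mul, norm_real, Real.norm_eq_abs,
        abs_of_neg (mul_neg_of_neg_of_pos hτ hy)]
      nlinarith [mul_le_mul_of_nonneg_left hz (mul_nonneg (neg_nonneg.2 hτ.le) hy.le)]
  have hden : -τ * y ^ 4 ≤ ‖(y : ℂ) ^ 2 * (sinh y * sinh (τ * y))‖ := by
    rw [norm_mul, norm_sinh_mul_sinh_of_neg hτ hy, norm_pow, norm_real, Real.norm_of_nonneg hy.le]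
    have h1 := Real.self_le_sinh_iff.2 hy.le
    have h2 := Real.self_le_sinh_iff.2 (mul_nonneg (neg_nonneg.2 hτ.le) hy.le)
    have : y * (-τ * y) ≤ Real.sinh y * Real.sinh (-τ * y) :=
      mul_le_mul h1 h2 (by nlinarith) (hy.le.trans h1)
    nlinarith [sq_nonneg y]
  rw [hypInt_eq hτ.ne hy.ne', norm_div]
  calc _ ≤ (3 * R + 1) * (a * y) ^ 4 / (-τ * y ^ 4) :=
        div_le_div₀ (by positivity) hnum (by nlinarith [pow_pos hy 4]) hden
    _ = (3 * R + 1) * a ^ 4 / -τ := by field_simp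

theorem exists_norm_hypInt_le_of_le {τ δ : ℝ} (hτ : τ < 0) (hδ : 0 < δ) (b R : ℝ) :
    ∃ C > 0, ∀ y, δ ≤ y → ∀ z : ℂ, |z.re| ≤ b → ‖z‖ ≤ R →
      ‖hypInt τ z y‖ ≤ R / y ^ 2 + C * Real.exp (-(1 - τ + τ * b) * y) := by
  set c : ℝ → ℝ := fun a ↦ (1 - Real.exp (-(2 * a))) / 2
  have hc {a : ℝ} (ha : 0 < a) : 0 < c a := by
    have := Real.exp_lt_one_iff.2 (by linarith : -(2 * a) < 0)
    simp only [c]; linarith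
  have hc₁ := hc hδ
  have hc₂ := hc (mul_pos (neg_pos.2 hτ) hδ)
  refine ⟨(δ * c δ * c (-τ * δ))⁻¹, by positivity, fun y hδy z hb hz ↦ ?_⟩
  have hy : 0 < y := hδ.trans_le hδy
  have hsinh₁ : c δ * Real.exp y ≤ Real.sinh y := Real.one_sub_exp_mul_exp_le_sinh hδy
  have hsinh₂ : c (-τ * δ) * Real.exp (-τ * y) ≤ Real.sinh (-τ * y) :=
    Real.one_sub_exp_mul_exp_le_sinh (by nlinarith)
  have hnum : ‖sinh (τ * y * z)‖ ≤ Real.exp (-τ * b * y) := by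
    refine (norm_sinh_le_exp_abs_re _).trans (Real.exp_le_exp.2 ?_)
    rw [← ofReal_mul, re_ofReal_mul, abs_mul, abs_of_neg (mul_neg_of_neg_of_pos hτ hy)]
    nlinarith [mul_le_mul_of_nonneg_left hb (mul_pos (neg_pos.2 hτ) hy).le]
  have hden : δ * c δ * c (-τ * δ) * Real.exp ((1 - τ) * y) ≤
      y * ‖sinh (y : ℂ) * sinh (τ * y)‖ := by
    rw [norm_sinh_mul_sinh_of_neg hτ hy, show (1 - τ) * y = y + -τ * y by ring, Real.exp_add]
    calc δ * c δ * c (-τ * δ) * (Real.exp y * Real.exp (-τ * y))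
        = δ * ((c δ * Real.exp y) * (c (-τ * δ) * Real.exp (-τ * y))) := by ring
      _ ≤ y * (Real.sinh y * Real.sinh (-τ * y)) := by gcongr
  have hsplit : hypInt τ z y = z / y ^ 2 - sinh (τ * y * z) / (y * (sinh y * sinh (τ * y))) := by
    rw [hypInt, sub_div, div_div, div_div, sq, mul_comm (sinh _ * _)]
  rw [hsplit]
  refine (norm_sub_le _ _).trans (add_le_add ?_ ?_)
  · rw [norm_div, norm_pow, norm_real, Real.norm_of_nonneg hy.le]
    gcongr
  · rw [norm_div, norm_mul, norm_real, Real.norm_of_nonneg hy.le]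
    calc _ ≤ Real.exp (-τ * b * y) / (δ * c δ * c (-τ * δ) * Real.exp ((1 - τ) * y)) :=
          div_le_div₀ (Real.exp_pos _).le hnum (by positivity) hden
      _ = _ := by
          rw [div_eq_inv_mul, mul_inv, mul_assoc, ← Real.exp_neg, ← Real.exp_add]
          ring_nf

theorem exists_norm_hypInt_le {τ b R : ℝ} (hτ : τ < 0) (hb : b < 1 - τ⁻¹) (hR : 0 ≤ R) :
    ∃ A C ε : ℝ, 0 < ε ∧ ∀ y > 0, ∀ z : ℂ, |z.re| ≤ b → ‖z‖ ≤ R →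
      ‖hypInt τ z y‖ ≤ A * (1 + y ^ 2)⁻¹ + C * Real.exp (-ε * y) := by
  set a := (1 - τ) * (1 + R)
  have ha : 1 ≤ a := one_le_mul_of_one_le_of_one_le (by linarith) (by linarith)
  set K := (3 * R + 1) * a ^ 4 / -τ
  have hK : 0 ≤ K := div_nonneg (by positivity) (by linarith)
  have hε : 0 < 1 - τ + τ * b := by
    have := mul_lt_mul_of_neg_left hb hτ
    rw [mul_sub, mul_inv_cancel₀ hτ.ne] at this
    linarith
  obtain ⟨C, hC, hfar⟩ := exists_norm_hypInt_le_of_le hτ (inv_pos.2 (by linarith : 0 < a)) b R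
  refine ⟨2 * K + R * (1 + a ^ 2), C, _, hε, fun y hy z hb hz ↦ ?_⟩
  rcases le_or_gt (a * y) 1 with hy_small | hy_large
  · have hexp : 0 ≤ C * Real.exp (-(1 - τ + τ * b) * y) := by positivity
    have hnear : ‖hypInt τ z y‖ ≤ K := norm_hypInt_le_of_mul_le_one hτ hz hy hy_small
    have hy1 : y ^ 2 ≤ 1 := pow_le_one₀ hy.le (by nlinarith)
    have : K ≤ 2 * K * (1 + y ^ 2)⁻¹ := by
      rw [← div_eq_mul_inv, le_div_iff₀ (by positivity)]
      nlinarith [mul_le_mul_of_nonneg_left hy1 hK]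
    have : 0 ≤ R * (1 + a ^ 2) * (1 + y ^ 2)⁻¹ := by positivity
    linarith
  · have hδy : a⁻¹ ≤ y := by
      rw [inv_le_iff_one_le_mul₀ (by linarith), mul_comm]; exact hy_large.le
    refine (hfar y hδy z hb hz).trans (add_le_add ?_ le_rfl)
    have : R / y ^ 2 ≤ R * (1 + a ^ 2) * (1 + y ^ 2)⁻¹ := by
      rw [← div_eq_mul_inv, div_le_div_iff₀ (by positivity) (by positivity)]
      nlinarith [mul_le_mul hy_large.le hy_large.le zero_le_one (by positivity)]
    have : 0 ≤ 2 * K * (1 + y ^ 2)⁻¹ := by positivity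
    linarith

theorem hypInt_locally_dominated {τ : ℝ} (hτ : τ < 0) {z₀ : ℂ} (hz₀ : |z₀.re| < 1 - τ⁻¹) :
    ∃ r > 0, ∃ bound : ℝ → ℝ, IntegrableOn bound (Ioi 0) ∧
      ∀ᵐ y ∂volume.restrict (Ioi 0), ∀ z ∈ closedBall z₀ r, ‖hypInt τ z y‖ ≤ bound y := by
  set r := (1 - τ⁻¹ - |z₀.re|) / 2
  have hr : 0 < r := by simp only [r]; linarith
  obtain ⟨A, C, ε, hε, hbound⟩ := exists_norm_hypInt_le (b := |z₀.re| + r) (R := ‖z₀‖ + r) hτ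
    (by simp only [r]; linarith) (by positivity)
  refine ⟨r, hr, fun y ↦ A * (1 + y ^ 2)⁻¹ + C * Real.exp (-ε * y),
    (integrable_inv_one_add_sq.const_mul A).integrableOn.add
      ((exp_neg_integrableOn_Ioi 0 hε).const_mul C),
    (ae_restrict_iff' measurableSet_Ioi).2 (.of_forall fun y hy z hz ↦ hbound y hy z ?_ ?_)⟩
  · have := abs_re_le_norm (z - z₀)
    rw [sub_re] at this
    have := abs_sub_abs_le_abs_sub z.re z₀.re
    linarith [mem_closedBall_iff_norm.1 hz]
  · linarith [norm_le_norm_add_norm_sub' z z₀, mem_closedBall_iff_norm.1 hz]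

theorem integrableOn_hypInt {τ : ℝ} (hτ : τ < 0) {z : ℂ} (hz : |z.re| < 1 - τ⁻¹) :
    IntegrableOn (hypInt τ z) (Ioi 0) := by
  obtain ⟨r, hr, bound, hbound_int, hbound⟩ := hypInt_locally_dominated hτ hz
  exact hbound_int.mono' ((continuousOn_hypInt hτ.ne z).aestronglyMeasurable measurableSet_Ioi)
    (hbound.mono fun y hy ↦ hy z (mem_closedBall_self hr.le))

/-- For `τ < 0` and `|Re z| < 1 − τ⁻¹` the integrand of the hyperbolic gamma function
is absolutely integrable on `(0,∞)`, so that `γ_τ(z)` is well defined, and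
`G_τ(z) = exp(i·γ_τ(z))` is analytic on the strip `{z : |Re z| < 1 − τ⁻¹}`. -/
theorem hyperbolic_gamma_integrable_and_analytic (τ : ℝ) (hτ : τ < 0) :
    (∀ z : ℂ, |z.re| < 1 - τ⁻¹ →
      MeasureTheory.IntegrableOn (hypInt τ z) (Set.Ioi (0 : ℝ))) ∧
    AnalyticOnNhd ℂ (hypGammaStrip τ) {z : ℂ | |z.re| < 1 - τ⁻¹} := by
  refine ⟨fun z hz ↦ integrableOn_hypInt hτ hz, ?_⟩
  have hU : IsOpen {z : ℂ | |z.re| < 1 - τ⁻¹} := isOpen_lt (by fun_prop) continuous_const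
  have hγ : DifferentiableOn ℂ (fun z ↦ ∫ y in Ioi 0, hypInt τ z y) {z : ℂ | |z.re| < 1 - τ⁻¹} :=
    differentiableOn_integral_of_dominated hU
      (fun z _ ↦ (continuousOn_hypInt hτ.ne z).aestronglyMeasurable measurableSet_Ioi)
      (.of_forall fun y ↦ (differentiable_hypInt τ y).differentiableOn)
      fun z₀ hz₀ ↦ hypInt_locally_dominated hτ hz₀
  exact (((hγ.const_mul _).const_mul I).cexp).analyticOnNhd hU
end
end

section
/- Let τ ∈ ℝ_{<0}. For every z ∈ ℂ with |Re(z)| < 1 − τ^{-1} one has the reflection identity G_τ(−z)·G_τ(z) = 1 and the modularity identity G_τ(z) = G_{τ^{-1}}(−τz) (note that τ^{-1} ∈ ℝ_{<0} and |Re(−τz)| < 1 − τ, so the right-hand side is defined). -/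
/-! The integrand of `γ_τ` is odd in `z`, which gives the reflection identity. For modularity,
the substitution `y = -τ u` turns the integrand of `γ_{τ⁻¹}(-τz)` into that of `γ_τ(z)`, because
the measure `dy/y` is invariant under dilations. -/

noncomputable section

open Complex MeasureTheory Set

theorem hypInt_neg (τ : ℝ) (z : ℂ) (y : ℝ) : hypInt τ (-z) y = -hypInt τ z y := by
  simp only [hypInt, mul_neg, Complex.sinh_neg]
  ring

theorem hypGammaArg_neg (τ : ℝ) (z : ℂ) : hypGammaArg τ (-z) = -hypGammaArg τ z := by
  simp only [hypGammaArg, hypInt_neg, integral_neg, mul_neg]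

theorem hypGammaStrip_neg_mul_self (τ : ℝ) (z : ℂ) :
    hypGammaStrip τ (-z) * hypGammaStrip τ z = 1 := by
  rw [hypGammaStrip, hypGammaStrip, hypGammaArg_neg, ← Complex.exp_add, mul_neg,
    neg_add_cancel, Complex.exp_zero]

theorem hypInt_inv_neg_mul {τ : ℝ} (hτ : τ ≠ 0) (z : ℂ) (u : ℝ) :
    hypInt τ⁻¹ (-(τ : ℂ) * z) (-τ * u) = (-τ)⁻¹ • hypInt τ z u := by
  rcases eq_or_ne u 0 with rfl | hu
  · simp [hypInt]
  have hτC : (τ : ℂ) ≠ 0 := by exact_mod_cast hτ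
  have huC : (u : ℂ) ≠ 0 := by exact_mod_cast hu
  have harg : (τ : ℂ)⁻¹ * (-(τ : ℂ) * u) * (-(τ : ℂ) * z) = τ * u * z := by field_simp
  have hscale : (τ : ℂ)⁻¹ * (-(τ : ℂ) * u) = -u := by field_simp
  simp only [hypInt, Complex.real_smul]
  push_cast
  rw [harg, hscale]
  simp only [neg_mul, Complex.sinh_neg]
  field_simp

theorem integral_hypInt_inv_neg_mul {τ : ℝ} (hτ : τ < 0) (z : ℂ) :
    ∫ y in Ioi (0 : ℝ), hypInt τ⁻¹ (-(τ : ℂ) * z) y = ∫ y in Ioi (0 : ℝ), hypInt τ z y := by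
  have hscale := integral_comp_mul_left_Ioi (hypInt τ⁻¹ (-(τ : ℂ) * z)) 0 (neg_pos.2 hτ)
  simp only [mul_zero, hypInt_inv_neg_mul hτ.ne, integral_smul] at hscale
  exact (smul_right_injective ℂ (inv_ne_zero (neg_pos.2 hτ).ne') hscale).symm

theorem hypGammaStrip_inv_neg_mul {τ : ℝ} (hτ : τ < 0) (z : ℂ) :
    hypGammaStrip τ⁻¹ (-(τ : ℂ) * z) = hypGammaStrip τ z := by
  rw [hypGammaStrip, hypGammaStrip, hypGammaArg, hypGammaArg, integral_hypInt_inv_neg_mul hτ]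

theorem hyperbolic_gamma_reflection_and_modularity_general (τ : ℝ) (hτ : τ < 0) (z : ℂ) :
    hypGammaStrip τ (-z) * hypGammaStrip τ z = 1 ∧
    hypGammaStrip τ z = hypGammaStrip τ⁻¹ (-(τ : ℂ) * z) :=
  ⟨hypGammaStrip_neg_mul_self τ z, (hypGammaStrip_inv_neg_mul hτ z).symm⟩

/-- Reflection equation `G_τ(−z)·G_τ(z) = 1` and modularity `G_τ(z) = G_{τ⁻¹}(−τz)`
for the hyperbolic gamma function on the strip `|Re z| < 1 − τ⁻¹`. -/
theorem hyperbolic_gamma_reflection_and_modularity (τ : ℝ) (hτ : τ < 0) (z : ℂ)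
    (hz : |z.re| < 1 - τ⁻¹) :
    hypGammaStrip τ (-z) * hypGammaStrip τ z = 1 ∧
    hypGammaStrip τ z = hypGammaStrip τ⁻¹ (-(τ : ℂ) * z) :=
  hyperbolic_gamma_reflection_and_modularity_general τ hτ z
end
end
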